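/- If there is no undirected path between pends(lsrc) and pends(lobs) in the undirected graph of a frame F (where lsrc and lobs are disjoint sets of channels), then there is no disclosure between lsrc and lobs. -/
import Mathlib


open scoped Classical

/-- A (static) frame: locations `LO`, channels `CH`, data values `D`.
Each channel has a sender and a recipient location; each location carries a
prefix-closed set of finite-or-infinite sequences of labels, where a label for
`ℓ` is a pair `(c, v)` with `c` a channel of `ℓ` and `v ∈ D`.  Sequences are
represented as functions `ℕ → Option (CH × D)` whose domain is an initial
segment of `ℕ`. -/
structure Frame (LO CH D : Type) where
  sender : CH → LO
  recipt : CH → LO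
  traces : LO → Set (ℕ → Option (CH × D))
  traces_dom : ∀ ℓ, ∀ t ∈ traces ℓ, ∀ m n : ℕ, m ≤ n → t n ≠ none → t m ≠ none
  traces_labels : ∀ ℓ, ∀ t ∈ traces ℓ, ∀ n c v, t n = some (c, v) →
    sender c = ℓ ∨ recipt c = ℓ
  traces_prefix : ∀ ℓ, ∀ t ∈ traces ℓ, ∀ n : ℕ,
    (fun m => if m < n then t m else none) ∈ traces ℓ

/-- Raw data of a system of events: a carrier set of events with a relation. -/
structure EvStruct (E : Type) where
  carrier : Set E
  rel : E → E → Prop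

variable {LO CH D E : Type}

/-- `B` is a system of events: `rel` is a partial order on `carrier`, and every
event has only finitely many predecessors. -/
def IsSysEv (B : EvStruct E) : Prop :=
  (∀ a b, B.rel a b → a ∈ B.carrier ∧ b ∈ B.carrier) ∧
  (∀ a ∈ B.carrier, B.rel a a) ∧
  (∀ a b, B.rel a b → B.rel b a → a = b) ∧
  (∀ a b c, B.rel a b → B.rel b c → B.rel a c) ∧
  (∀ a ∈ B.carrier, {x | B.rel x a}.Finite)

/-- `B1` is a substructure of `B2`: carrier included, order the restriction. -/
def Substructure (B1 B2 : EvStruct E) : Prop :=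
  B1.carrier ⊆ B2.carrier ∧
  ∀ a b, B1.rel a b ↔ (a ∈ B1.carrier ∧ b ∈ B1.carrier ∧ B2.rel a b)

/-- Initial substructure: a substructure that is downward closed. -/
def InitialSubstructure (B1 B2 : EvStruct E) : Prop :=
  Substructure B1 B2 ∧ ∀ y ∈ B1.carrier, ∀ x, B2.rel x y → x ∈ B1.carrier

/-- The events of `B` whose channel has `ℓ` as sender or recipient. -/
def evProj (F : Frame LO CH D) (chan : E → CH) (B : EvStruct E) (ℓ : LO) : Set E :=
  {e | e ∈ B.carrier ∧ (F.sender (chan e) = ℓ ∨ F.recipt (chan e) = ℓ)}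

/-- The projection of `B` to location `ℓ`, viewed as a sequence of labels:
the `n`-th entry is the label of the event of `evProj F chan B ℓ` having
exactly `n` strict predecessors there. -/
noncomputable def projSeq (F : Frame LO CH D) (chan : E → CH) (msg : E → D)
    (B : EvStruct E) (ℓ : LO) : ℕ → Option (CH × D) := fun n =>
  if h : ∃ e, e ∈ evProj F chan B ℓ ∧
      Set.ncard {e' | e' ∈ evProj F chan B ℓ ∧ B.rel e' e ∧ e' ≠ e} = n
  then some (chan h.choose, msg h.choose)
  else none

/-- `B` is an execution of `F`: a system of events whose projection to each
location is linearly ordered and, viewed as a sequence, a trace of that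
location. -/
def IsExec (F : Frame LO CH D) (chan : E → CH) (msg : E → D) (B : EvStruct E) : Prop :=
  IsSysEv B ∧ ∀ ℓ : LO,
    (∀ a ∈ evProj F chan B ℓ, ∀ b ∈ evProj F chan B ℓ, B.rel a b ∨ B.rel b a) ∧
    projSeq F chan msg B ℓ ∈ F.traces ℓ

/-- Restriction `B|C` of `B` to the events whose channel lies in `C`. -/
def evRestrict (chan : E → CH) (B : EvStruct E) (C : Set CH) : EvStruct E where
  carrier := {e | e ∈ B.carrier ∧ chan e ∈ C}
  rel := fun a b => B.rel a b ∧ chan a ∈ C ∧ chan b ∈ C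

/-- `lruns C`: the `C`-runs of `F`, i.e. restrictions to `C` of executions. -/
def lruns (F : Frame LO CH D) (chan : E → CH) (msg : E → D) (C : Set CH) :
    Set (EvStruct E) :=
  {B | ∃ A : EvStruct E, IsExec F chan msg A ∧ evRestrict chan A C = B}

/-- `J_{C→C'}(B)`: the `C'`-runs compatible with `B`. -/
def cmpt (F : Frame LO CH D) (chan : E → CH) (msg : E → D)
    (C C' : Set CH) (B : EvStruct E) : Set (EvStruct E) :=
  {B' | ∃ A : EvStruct E, IsExec F chan msg A ∧
      evRestrict chan A C = B ∧ evRestrict chan A C' = B'}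

/-- `F` has no disclosure from `C` to `C'`. -/
def NoDisclosure (F : Frame LO CH D) (chan : E → CH) (msg : E → D)
    (C C' : Set CH) : Prop :=
  ∀ B ∈ lruns F chan msg C, cmpt F chan msg C C' B = lruns F chan msg C'

/-- The locations that are sender or recipient of some channel in `C`. -/
def pends (F : Frame LO CH D) (C : Set CH) : Set LO :=
  {ℓ | ∃ c ∈ C, F.sender c = ℓ ∨ F.recipt c = ℓ}

/-- Adjacency in the undirected graph of `F` via a channel avoiding `K`. -/
def adjAvoiding (F : Frame LO CH D) (K : Set CH) (ℓ1 ℓ2 : LO) : Prop :=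
  ∃ c, c ∉ K ∧
    ((F.sender c = ℓ1 ∧ F.recipt c = ℓ2) ∨ (F.sender c = ℓ2 ∧ F.recipt c = ℓ1))

/-- `lcut` is an undirected cut between `lsrc` and `lobs`: the three sets are
pairwise disjoint and every undirected path from a location of `pends lobs`
to a location of `pends lsrc` traverses some channel of `lcut`, i.e. there is
no path avoiding `lcut`. -/
def IsCut (F : Frame LO CH D) (lsrc lcut lobs : Set CH) : Prop :=
  (Disjoint lsrc lcut ∧ Disjoint lsrc lobs ∧ Disjoint lcut lobs) ∧
  ∀ ℓ1 ∈ pends F lobs, ∀ ℓ2 ∈ pends F lsrc,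
    ¬ Relation.ReflTransGen (adjAvoiding F lcut) ℓ1 ℓ2

/-- Adjacency in the undirected graph of `F`. -/
def adjacent (F : Frame LO CH D) (ℓ1 ℓ2 : LO) : Prop :=
  ∃ c : CH,
    (F.sender c = ℓ1 ∧ F.recipt c = ℓ2) ∨ (F.sender c = ℓ2 ∧ F.recipt c = ℓ1)

/-! ### Auxiliary machinery -/

theorem EvStruct.ext' {B1 B2 : EvStruct E} (h1 : B1.carrier = B2.carrier)
    (h2 : B1.rel = B2.rel) : B1 = B2 := by
  cases B1; cases B2; simp_all

/-- Abstract "n-th label" of a family of predicates. -/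
noncomputable def nthLabel (chan : E → CH) (msg : E → D) (Q : ℕ → E → Prop) :
    ℕ → Option (CH × D) := fun n =>
  if h : ∃ e, Q n e then some (chan h.choose, msg h.choose) else none

theorem projSeq_eq_nthLabel (F : Frame LO CH D) (chan : E → CH) (msg : E → D)
    (B : EvStruct E) (ℓ : LO) :
    projSeq F chan msg B ℓ = nthLabel chan msg (fun n e => e ∈ evProj F chan B ℓ ∧
      Set.ncard {e' | e' ∈ evProj F chan B ℓ ∧ B.rel e' e ∧ e' ≠ e} = n) := rfl

theorem projSeq_congr (F : Frame LO CH D) (chan : E → CH) (msg : E → D)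
    (B B' : EvStruct E) (ℓ : LO)
    (hproj : evProj F chan B ℓ = evProj F chan B' ℓ)
    (hrel : ∀ a ∈ evProj F chan B ℓ, ∀ b ∈ evProj F chan B ℓ,
      (B.rel a b ↔ B'.rel a b)) :
    projSeq F chan msg B ℓ = projSeq F chan msg B' ℓ := by
  rw [projSeq_eq_nthLabel, projSeq_eq_nthLabel]
  apply congrArg (nthLabel chan msg)
  funext n e
  by_cases he : e ∈ evProj F chan B ℓ
  · have hset : {e' | e' ∈ evProj F chan B ℓ ∧ B.rel e' e ∧ e' ≠ e} =
        {e' | e' ∈ evProj F chan B' ℓ ∧ B'.rel e' e ∧ e' ≠ e} := by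
      ext e'
      simp only [Set.mem_setOf_eq, ← hproj]
      exact and_congr_right fun he' => and_congr_left fun _ => hrel e' he' e he
    rw [hset, hproj]
  · have he' : e ∉ evProj F chan B' ℓ := by rw [← hproj]; exact he
    exact propext (iff_of_false (fun h => he h.1) (fun h => he' h.1))

/-- Merge of two event structures, deciding by a predicate on channels which
one an event is taken from. -/
def mergeEv (chan : E → CH) (P : CH → Prop) (A1 A2 : EvStruct E) : EvStruct E where
  carrier := {e | (e ∈ A1.carrier ∧ P (chan e)) ∨ (e ∈ A2.carrier ∧ ¬ P (chan e))}
  rel := fun a b => (A1.rel a b ∧ P (chan a) ∧ P (chan b)) ∨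
    (A2.rel a b ∧ ¬ P (chan a) ∧ ¬ P (chan b))

theorem merge_isSysEv (chan : E → CH) (P : CH → Prop) {A1 A2 : EvStruct E}
    (h1 : IsSysEv A1) (h2 : IsSysEv A2) : IsSysEv (mergeEv chan P A1 A2) := by
  obtain ⟨h1c, h1r, h1a, h1t, h1f⟩ := h1
  obtain ⟨h2c, h2r, h2a, h2t, h2f⟩ := h2
  refine ⟨?_, ?_, ?_, ?_, ?_⟩
  · rintro a b (⟨hr, hpa, hpb⟩ | ⟨hr, hpa, hpb⟩)
    · exact ⟨Or.inl ⟨(h1c a b hr).1, hpa⟩, Or.inl ⟨(h1c a b hr).2, hpb⟩⟩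
    · exact ⟨Or.inr ⟨(h2c a b hr).1, hpa⟩, Or.inr ⟨(h2c a b hr).2, hpb⟩⟩
  · rintro a (⟨ha, hp⟩ | ⟨ha, hp⟩)
    · exact Or.inl ⟨h1r a ha, hp, hp⟩
    · exact Or.inr ⟨h2r a ha, hp, hp⟩
  · rintro a b (⟨hr, hpa, hpb⟩ | ⟨hr, hpa, hpb⟩) (⟨hr', hqb, hqa⟩ | ⟨hr', hqb, hqa⟩)
    · exact h1a a b hr hr'
    · exact absurd hpb hqb
    · exact absurd hqb hpb
    · exact h2a a b hr hr'
  · rintro a b c (⟨hr, hpa, hpb⟩ | ⟨hr, hpa, hpb⟩) (⟨hr', hpb', hpc'⟩ | ⟨hr', hpb', hpc'⟩)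
    · exact Or.inl ⟨h1t a b c hr hr', hpa, hpc'⟩
    · exact absurd hpb hpb'
    · exact absurd hpb' hpb
    · exact Or.inr ⟨h2t a b c hr hr', hpa, hpc'⟩
  · rintro a (⟨ha, hp⟩ | ⟨ha, hp⟩)
    · refine Set.Finite.subset (h1f a ha) ?_
      rintro x (⟨hr, _, _⟩ | ⟨_, _, hpa⟩)
      · exact hr
      · exact absurd hp hpa
    · refine Set.Finite.subset (h2f a ha) ?_
      rintro x (⟨_, _, hpa⟩ | ⟨hr, _, _⟩)
      · exact absurd hpa hp
      · exact hr

theorem merge_evProj_left (F : Frame LO CH D) (chan : E → CH) (P : CH → Prop)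
    (A1 A2 : EvStruct E) (ℓ : LO)
    (h : ∀ c, (F.sender c = ℓ ∨ F.recipt c = ℓ) → P c) :
    evProj F chan (mergeEv chan P A1 A2) ℓ = evProj F chan A1 ℓ := by
  ext e
  constructor
  · rintro ⟨(⟨ha, _⟩ | ⟨_, hp⟩), hend⟩
    · exact ⟨ha, hend⟩
    · exact absurd (h _ hend) hp
  · rintro ⟨ha, hend⟩
    exact ⟨Or.inl ⟨ha, h _ hend⟩, hend⟩

theorem merge_evProj_right (F : Frame LO CH D) (chan : E → CH) (P : CH → Prop)
    (A1 A2 : EvStruct E) (ℓ : LO)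
    (h : ∀ c, (F.sender c = ℓ ∨ F.recipt c = ℓ) → ¬ P c) :
    evProj F chan (mergeEv chan P A1 A2) ℓ = evProj F chan A2 ℓ := by
  ext e
  constructor
  · rintro ⟨(⟨_, hp⟩ | ⟨ha, _⟩), hend⟩
    · exact absurd hp (h _ hend)
    · exact ⟨ha, hend⟩
  · rintro ⟨ha, hend⟩
    exact ⟨Or.inr ⟨ha, h _ hend⟩, hend⟩

theorem merge_rel_left (F : Frame LO CH D) (chan : E → CH) (P : CH → Prop)
    (A1 A2 : EvStruct E) (ℓ : LO)
    (h : ∀ c, (F.sender c = ℓ ∨ F.recipt c = ℓ) → P c)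
    {a b : E} (ha : a ∈ evProj F chan (mergeEv chan P A1 A2) ℓ)
    (hb : b ∈ evProj F chan (mergeEv chan P A1 A2) ℓ) :
    (mergeEv chan P A1 A2).rel a b ↔ A1.rel a b := by
  constructor
  · rintro (⟨hr, _, _⟩ | ⟨_, hpa, _⟩)
    · exact hr
    · exact absurd (h _ ha.2) hpa
  · intro hr
    exact Or.inl ⟨hr, h _ ha.2, h _ hb.2⟩

theorem merge_rel_right (F : Frame LO CH D) (chan : E → CH) (P : CH → Prop)
    (A1 A2 : EvStruct E) (ℓ : LO)
    (h : ∀ c, (F.sender c = ℓ ∨ F.recipt c = ℓ) → ¬ P c)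
    {a b : E} (ha : a ∈ evProj F chan (mergeEv chan P A1 A2) ℓ)
    (hb : b ∈ evProj F chan (mergeEv chan P A1 A2) ℓ) :
    (mergeEv chan P A1 A2).rel a b ↔ A2.rel a b := by
  constructor
  · rintro (⟨_, hpa, _⟩ | ⟨hr, _, _⟩)
    · exact absurd hpa (h _ ha.2)
    · exact hr
  · intro hr
    exact Or.inr ⟨hr, h _ ha.2, h _ hb.2⟩

theorem merge_isExec (F : Frame LO CH D) (chan : E → CH) (msg : E → D)
    (T : Set LO) (A1 A2 : EvStruct E)
    (hT : ∀ c, F.sender c ∈ T ↔ F.recipt c ∈ T)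
    (hA1 : IsExec F chan msg A1) (hA2 : IsExec F chan msg A2) :
    IsExec F chan msg (mergeEv chan (fun c => F.sender c ∈ T) A1 A2) := by
  set P : CH → Prop := fun c => F.sender c ∈ T with hP
  refine ⟨merge_isSysEv chan P hA1.1 hA2.1, fun ℓ => ?_⟩
  by_cases hℓ : ℓ ∈ T
  · have h : ∀ c, (F.sender c = ℓ ∨ F.recipt c = ℓ) → P c := by
      rintro c (rfl | hc)
      · exact hℓ
      · exact (hT c).2 (hc ▸ hℓ)
    have hproj := merge_evProj_left F chan P A1 A2 ℓ h
    constructor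
    · intro a ha b hb
      have := (hA1.2 ℓ).1 a (hproj ▸ ha) b (hproj ▸ hb)
      rcases this with hr | hr
      · exact Or.inl ((merge_rel_left F chan P A1 A2 ℓ h ha hb).2 hr)
      · exact Or.inr ((merge_rel_left F chan P A1 A2 ℓ h hb ha).2 hr)
    · rw [projSeq_congr F chan msg _ A1 ℓ hproj
        (fun a ha b hb => merge_rel_left F chan P A1 A2 ℓ h ha hb)]
      exact (hA1.2 ℓ).2
  · have h : ∀ c, (F.sender c = ℓ ∨ F.recipt c = ℓ) → ¬ P c := by
      rintro c (rfl | hc)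
      · exact hℓ
      · exact fun hp => hℓ (hc ▸ (hT c).1 hp)
    have hproj := merge_evProj_right F chan P A1 A2 ℓ h
    constructor
    · intro a ha b hb
      have := (hA2.2 ℓ).1 a (hproj ▸ ha) b (hproj ▸ hb)
      rcases this with hr | hr
      · exact Or.inl ((merge_rel_right F chan P A1 A2 ℓ h ha hb).2 hr)
      · exact Or.inr ((merge_rel_right F chan P A1 A2 ℓ h hb ha).2 hr)
    · rw [projSeq_congr F chan msg _ A2 ℓ hproj
        (fun a ha b hb => merge_rel_right F chan P A1 A2 ℓ h ha hb)]
      exact (hA2.2 ℓ).2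

theorem merge_evRestrict_left (chan : E → CH) (P : CH → Prop)
    (A1 A2 : EvStruct E) (C : Set CH) (h : ∀ c ∈ C, P c) :
    evRestrict chan (mergeEv chan P A1 A2) C = evRestrict chan A1 C := by
  apply EvStruct.ext'
  · ext e
    constructor
    · rintro ⟨(⟨ha, _⟩ | ⟨_, hp⟩), hc⟩
      · exact ⟨ha, hc⟩
      · exact absurd (h _ hc) hp
    · rintro ⟨ha, hc⟩
      exact ⟨Or.inl ⟨ha, h _ hc⟩, hc⟩
  · funext a b
    apply propext
    constructor
    · rintro ⟨(⟨hr, _, _⟩ | ⟨_, hpa, _⟩), hca, hcb⟩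
      · exact ⟨hr, hca, hcb⟩
      · exact absurd (h _ hca) hpa
    · rintro ⟨hr, hca, hcb⟩
      exact ⟨Or.inl ⟨hr, h _ hca, h _ hcb⟩, hca, hcb⟩

theorem merge_evRestrict_right (chan : E → CH) (P : CH → Prop)
    (A1 A2 : EvStruct E) (C : Set CH) (h : ∀ c ∈ C, ¬ P c) :
    evRestrict chan (mergeEv chan P A1 A2) C = evRestrict chan A2 C := by
  apply EvStruct.ext'
  · ext e
    constructor
    · rintro ⟨(⟨_, hp⟩ | ⟨ha, _⟩), hc⟩
      · exact absurd hp (h _ hc)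
      · exact ⟨ha, hc⟩
    · rintro ⟨ha, hc⟩
      exact ⟨Or.inr ⟨ha, h _ hc⟩, hc⟩
  · funext a b
    apply propext
    constructor
    · rintro ⟨(⟨_, hpa, _⟩ | ⟨hr, _, _⟩), hca, hcb⟩
      · exact absurd hpa (h _ hca)
      · exact ⟨hr, hca, hcb⟩
    · rintro ⟨hr, hca, hcb⟩
      exact ⟨Or.inr ⟨hr, h _ hca, h _ hcb⟩, hca, hcb⟩

/-- Key lemma: a set `T` of locations closed under the endpoints of channels,
containing the senders of `lsrc` and avoiding the senders of `lobs`, yields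
no disclosure from `lsrc` to `lobs`. -/
theorem noDisclosure_of_sep (F : Frame LO CH D) (chan : E → CH) (msg : E → D)
    (lsrc lobs : Set CH) (T : Set LO)
    (hT : ∀ c, F.sender c ∈ T ↔ F.recipt c ∈ T)
    (hsrc : ∀ c ∈ lsrc, F.sender c ∈ T)
    (hobs : ∀ c ∈ lobs, F.sender c ∉ T) :
    NoDisclosure F chan msg lsrc lobs := by
  intro B hB
  ext B'
  constructor
  · rintro ⟨A, hA, -, hA'⟩
    exact ⟨A, hA, hA'⟩
  · rintro ⟨A2, hA2, hA2'⟩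
    obtain ⟨A1, hA1, hA1'⟩ := hB
    refine ⟨mergeEv chan (fun c => F.sender c ∈ T) A1 A2,
      merge_isExec F chan msg T A1 A2 hT hA1 hA2, ?_, ?_⟩
    · rw [merge_evRestrict_left chan _ A1 A2 lsrc hsrc]
      exact hA1'
    · rw [merge_evRestrict_right chan _ A1 A2 lobs hobs]
      exact hA2'

/-- if there is no undirected path between `pends lsrc` and
`pends lobs`, then there is no disclosure between `lsrc` and `lobs`. -/
theorem disconnected_noDisclosure (F : Frame LO CH D) (chan : E → CH) (msg : E → D)
    (lsrc lobs : Set CH) (hdisj : Disjoint lsrc lobs)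
    (hpath : ∀ ℓ1 ∈ pends F lsrc, ∀ ℓ2 ∈ pends F lobs,
      ¬ Relation.ReflTransGen (adjacent F) ℓ1 ℓ2) :
    NoDisclosure F chan msg lsrc lobs ∧ NoDisclosure F chan msg lobs lsrc := by
  set T : Set LO :=
    {ℓ | ∃ ℓ0 ∈ pends F lsrc, Relation.ReflTransGen (adjacent F) ℓ0 ℓ} with hTdef
  have hT : ∀ c, F.sender c ∈ T ↔ F.recipt c ∈ T := by
    intro c
    constructor
    · rintro ⟨ℓ0, h0, hpath'⟩
      exact ⟨ℓ0, h0, hpath'.tail ⟨c, Or.inl ⟨rfl, rfl⟩⟩⟩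
    · rintro ⟨ℓ0, h0, hpath'⟩
      exact ⟨ℓ0, h0, hpath'.tail ⟨c, Or.inr ⟨rfl, rfl⟩⟩⟩
  have hsrc : ∀ c ∈ lsrc, F.sender c ∈ T := fun c hc =>
    ⟨F.sender c, ⟨c, hc, Or.inl rfl⟩, Relation.ReflTransGen.refl⟩
  have hobs : ∀ c ∈ lobs, F.sender c ∉ T := by
    rintro c hc ⟨ℓ0, h0, hpath'⟩
    exact hpath ℓ0 h0 (F.sender c) ⟨c, hc, Or.inl rfl⟩ hpath'
  constructor
  · exact noDisclosure_of_sep F chan msg lsrc lobs T hT hsrc hobs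
  · refine noDisclosure_of_sep F chan msg lobs lsrc Tᶜ (fun c => not_iff_not.2 (hT c))
      hobs (fun c hc => ?_)
    simp only [Set.mem_compl_iff, not_not]
    exact hsrc c hc
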